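/- Let Q be a finite set of size m ≥ 1, n ≥ 1 an integer, p ≥ 1 and σ ≥ 0 reals, and let (z^t)_{t≥0} be a deficit process on Q satisfying the potential-rule moment conditions with parameters n, σ², p. Then for every t ≥ 0 and every real c > 0, the number of q ∈ Q with z^t_q > c is at most m · ((4p² + 2√e · p · σ² · t / n) / c²)^p. -/

import Mathlib

/-!
Since the increments are bounded by `1`, Taylor's formula bounds `f(z + Δ)` by
`f(z) + f'(z) Δ + 2p²√e (z² + 4p²)^(p-1) Δ²`: on `[z - 1, z + 1]` one has
`f'' ≤ 4p² (u² + 4p²)^(p-1)`, and the summand `4p²` in `f` keeps the growth factor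
`(1 + (2z + 1)/(z² + 4p²))^(p-1)` below `√e`. Averaging over the `n` increments kills the
linear term (nonpositive mean) and leaves at most `p (z² + 4p²)^(p-1) C` with
`C = 2√e p σ²/n`, which Bernoulli's inequality absorbs into `(z² + 4p² + C)^p`. Minkowski's
inequality in `ℓ^p(Q)` then propagates `∑_q f(z^t_q) ≤ m (4p² + C t)^p` from `t` to `t + 1`,
and Markov's inequality with `f(u) ≥ c^(2p)` for `u > c` bounds the number of disappointed `q`.
-/

open Finset

/-- The potential component `f p u = (u² + 4p²) ^ p` (real power). -/
noncomputable def potComp (p u : ℝ) : ℝ := (u ^ 2 + 4 * p ^ 2) ^ p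

/-- A deficit process on `Q` satisfying the potential-rule moment conditions with
parameters `n`, `σ²`, `p`. -/
def DeficitProcess (Q : Type*) [Fintype Q] (n : ℕ) (σ p : ℝ) (z : ℕ → Q → ℝ) : Prop :=
  (∀ t q, 0 ≤ z t q) ∧ (∀ q, z 0 q = 0) ∧
  ∀ t : ℕ, ∃ Δ : Q → Fin n → ℝ,
    (∀ q k, -1 ≤ Δ q k ∧ Δ q k ≤ 1) ∧
    (∀ q, ∑ k, Δ q k ≤ 0) ∧
    (∀ q, ∑ k, (Δ q k) ^ 2 ≤ σ ^ 2) ∧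
    (∑ q, potComp p (z (t + 1) q) ≤
      (1 / (n : ℝ)) * ∑ k, ∑ q, potComp p (max (z t q + Δ q k) 0))

open Real

theorem ConvexOn.add_mul_sub_le_of_hasDerivAt {S : Set ℝ} {f : ℝ → ℝ} {f' x y : ℝ}
    (hf : ConvexOn ℝ S f) (hx : x ∈ S) (hy : y ∈ S) (hf' : HasDerivAt f f' x) :
    f x + f' * (y - x) ≤ f y := by
  rcases lt_trichotomy x y with hxy | rfl | hxy
  · have h := hf.le_slope_of_hasDerivAt hx hy hxy hf'
    rw [slope_def_field, le_div_iff₀ (sub_pos.2 hxy)] at h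
    linarith
  · simp
  · have h := hf.slope_le_of_hasDerivAt hy hx hxy hf'
    rw [slope_def_field, div_le_iff₀ (sub_pos.2 hxy)] at h
    linarith

theorem rpow_add_mul_rpow_sub_one_le {p a c : ℝ} (hp : 1 ≤ p) (ha : 0 ≤ a) (hac : 0 ≤ a + c) :
    a ^ p + p * a ^ (p - 1) * c ≤ (a + c) ^ p := by
  simpa using (convexOn_rpow hp).add_mul_sub_le_of_hasDerivAt ha hac
    (hasDerivAt_rpow_const (Or.inr hp))

theorem le_add_mul_sub_add_of_deriv2_le {D : Set ℝ} (hD : Convex ℝ D) {g g' g'' : ℝ → ℝ}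
    {M x y : ℝ} (hg : ∀ s, HasDerivAt g (g' s) s) (hg' : ∀ s, HasDerivAt g' (g'' s) s)
    (hM : ∀ s ∈ D, g'' s ≤ M) (hx : x ∈ D) (hy : y ∈ D) :
    g y ≤ g x + g' x * (y - x) + M / 2 * (y - x) ^ 2 := by
  have hφ (s : ℝ) : HasDerivAt (fun s ↦ M / 2 * (s - x) ^ 2 - g s) (M * (s - x) - g' s) s := by
    refine (((((hasDerivAt_id' s).sub_const x).fun_pow 2).const_mul (M / 2)).fun_sub
      (hg s)).congr_deriv ?_
    push_cast; ring
  have hφ' (s : ℝ) : HasDerivAt (fun s ↦ M * (s - x) - g' s) (M - g'' s) s := by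
    refine ((((hasDerivAt_id' s).sub_const x).const_mul M).fun_sub (hg' s)).congr_deriv ?_
    ring
  have hconv : ConvexOn ℝ D (fun s ↦ M / 2 * (s - x) ^ 2 - g s) :=
    convexOn_of_hasDerivWithinAt2_nonneg hD (fun s _ ↦ (hφ s).continuousAt.continuousWithinAt)
      (fun s _ ↦ (hφ s).hasDerivWithinAt) (fun s _ ↦ (hφ' s).hasDerivWithinAt)
      (fun s hs ↦ sub_nonneg.2 (hM s (interior_subset hs)))
  have h := hconv.add_mul_sub_le_of_hasDerivAt hx hy (hφ x)
  simp only [sub_self] at h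
  linarith

theorem hasDerivAt_sq_add_rpow {a q : ℝ} (ha : 0 < a) (u : ℝ) :
    HasDerivAt (fun u ↦ (u ^ 2 + a) ^ q) (2 * q * u * (u ^ 2 + a) ^ (q - 1)) u := by
  convert ((hasDerivAt_pow 2 u).add_const a).rpow_const (p := q) (Or.inl (by positivity)) using 1
  push_cast; ring

theorem deriv2_sq_add_rpow_le {a p : ℝ} (ha : 0 < a) (hp : 1 ≤ p) (u : ℝ) :
    2 * p * (u ^ 2 + a) ^ (p - 1) + 2 * p * u * (2 * (p - 1) * u * (u ^ 2 + a) ^ (p - 1 - 1))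
      ≤ 4 * p ^ 2 * (u ^ 2 + a) ^ (p - 1) := by
  set X := (u ^ 2 + a) ^ (p - 1)
  set Y := (u ^ 2 + a) ^ (p - 1 - 1)
  have hB : 0 < u ^ 2 + a := by positivity
  have hX : 0 ≤ X := by positivity
  have hYX : u ^ 2 * Y ≤ X :=
    calc u ^ 2 * Y ≤ (u ^ 2 + a) * Y := by gcongr; linarith
      _ = X := by rw [mul_comm, ← rpow_add_one hB.ne', sub_add_cancel]
  have hpp : 0 ≤ 4 * p * (p - 1) := by nlinarith
  calc 2 * p * X + 2 * p * u * (2 * (p - 1) * u * Y)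
        = 2 * p * X + 4 * p * (p - 1) * (u ^ 2 * Y) := by ring
    _ ≤ 2 * p * X + 4 * p * (p - 1) * X := by gcongr
    _ ≤ 4 * p ^ 2 * X := by nlinarith

theorem sq_add_rpow_sub_one_le {p z s : ℝ} (hp : 1 ≤ p) (hz : 0 ≤ z) (hs : |s - z| ≤ 1) :
    (s ^ 2 + 4 * p ^ 2) ^ (p - 1) ≤ √(exp 1) * (z ^ 2 + 4 * p ^ 2) ^ (p - 1) := by
  set A := z ^ 2 + 4 * p ^ 2
  have hA : 0 < A := by positivity
  obtain ⟨hs₁, hs₂⟩ := abs_le.1 hs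
  have hgrowth : s ^ 2 + 4 * p ^ 2 ≤ A * exp ((2 * z + 1) / A) :=
    calc s ^ 2 + 4 * p ^ 2 ≤ A * (1 + (2 * z + 1) / A) := by
          rw [mul_add, mul_div_cancel₀ _ hA.ne']; nlinarith
      _ ≤ A * exp ((2 * z + 1) / A) := by
          gcongr; linarith [add_one_le_exp ((2 * z + 1) / A)]
  -- `A - 2 (2z + 1)(p - 1) = (z - 2(p - 1))² + 6p - 2`
  have hexponent : (2 * z + 1) / A * (p - 1) ≤ 1 / 2 := by
    rw [div_mul_eq_mul_div, div_le_iff₀ hA]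
    nlinarith [sq_nonneg (z - 2 * (p - 1))]
  calc (s ^ 2 + 4 * p ^ 2) ^ (p - 1) ≤ (A * exp ((2 * z + 1) / A)) ^ (p - 1) :=
        rpow_le_rpow (by positivity) hgrowth (by linarith)
    _ = A ^ (p - 1) * exp ((2 * z + 1) / A * (p - 1)) := by
        rw [mul_rpow hA.le (exp_pos _).le, ← exp_mul]
    _ ≤ A ^ (p - 1) * exp (1 / 2) := by gcongr
    _ = √(exp 1) * A ^ (p - 1) := by rw [exp_half, mul_comm]

theorem potComp_le_taylor {p z s : ℝ} (hp : 1 ≤ p) (hz : 0 ≤ z) (hs : |s - z| ≤ 1) :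
    potComp p s ≤ potComp p z + 2 * p * z * (z ^ 2 + 4 * p ^ 2) ^ (p - 1) * (s - z)
      + 2 * p ^ 2 * √(exp 1) * (z ^ 2 + 4 * p ^ 2) ^ (p - 1) * (s - z) ^ 2 := by
  have ha : (0 : ℝ) < 4 * p ^ 2 := by positivity
  have hg' (u : ℝ) : HasDerivAt (fun u ↦ 2 * p * u * (u ^ 2 + 4 * p ^ 2) ^ (p - 1))
      (2 * p * (u ^ 2 + 4 * p ^ 2) ^ (p - 1)
        + 2 * p * u * (2 * (p - 1) * u * (u ^ 2 + 4 * p ^ 2) ^ (p - 1 - 1))) u := by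
    refine (((hasDerivAt_id' u).const_mul (2 * p)).fun_mul
      (hasDerivAt_sq_add_rpow ha u)).congr_deriv ?_
    ring
  have hM : ∀ u ∈ Set.Icc (z - 1) (z + 1), 2 * p * (u ^ 2 + 4 * p ^ 2) ^ (p - 1)
        + 2 * p * u * (2 * (p - 1) * u * (u ^ 2 + 4 * p ^ 2) ^ (p - 1 - 1))
      ≤ 4 * p ^ 2 * (√(exp 1) * (z ^ 2 + 4 * p ^ 2) ^ (p - 1)) := by
    intro u hu
    have hu' : |u - z| ≤ 1 := abs_le.2 ⟨by linarith [hu.1], by linarith [hu.2]⟩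
    exact (deriv2_sq_add_rpow_le ha hp u).trans (by gcongr; exact sq_add_rpow_sub_one_le hp hz hu')
  obtain ⟨hs₁, hs₂⟩ := abs_le.1 hs
  have h := le_add_mul_sub_add_of_deriv2_le (convex_Icc _ _) (hasDerivAt_sq_add_rpow ha) hg' hM
    (x := z) (y := s) ⟨by linarith, by linarith⟩ ⟨by linarith, by linarith⟩
  unfold potComp
  linarith

theorem potComp_max_zero_le {p : ℝ} (hp : 0 ≤ p) (u : ℝ) : potComp p (max u 0) ≤ potComp p u := by
  have hsq : max u 0 ^ 2 ≤ u ^ 2 := by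
    rcases le_total u 0 with h | h <;> simp [h, sq_nonneg]
  exact rpow_le_rpow (by positivity) (by linarith) hp

theorem avg_potComp_max_le {ι : Type*} [Fintype ι] [Nonempty ι] {p σ z : ℝ} (hp : 1 ≤ p)
    (hz : 0 ≤ z) {Δ : ι → ℝ} (hΔ : ∀ k, |Δ k| ≤ 1) (hsum : ∑ k, Δ k ≤ 0)
    (hsq : ∑ k, Δ k ^ 2 ≤ σ ^ 2) :
    1 / (Fintype.card ι : ℝ) * ∑ k, potComp p (max (z + Δ k) 0) ≤
      (z ^ 2 + 4 * p ^ 2 + 2 * √(exp 1) * p * σ ^ 2 / Fintype.card ι) ^ p := by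
  set N : ℝ := (Fintype.card ι : ℝ)
  have hN : 0 < N := Nat.cast_pos.2 Fintype.card_pos
  set A := z ^ 2 + 4 * p ^ 2
  have hA : 0 < A := by positivity
  set K := 2 * p ^ 2 * √(exp 1) * A ^ (p - 1)
  have hK : 0 ≤ K := by positivity
  have hcoef : 0 ≤ 2 * p * z * A ^ (p - 1) := by positivity
  have hpoint (k : ι) : potComp p (max (z + Δ k) 0) ≤
      A ^ p + 2 * p * z * A ^ (p - 1) * Δ k + K * Δ k ^ 2 := by
    have h := potComp_le_taylor hp hz (s := z + Δ k) (by simpa using hΔ k)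
    simp only [add_sub_cancel_left] at h
    exact (potComp_max_zero_le (by linarith) _).trans h
  have htotal : ∑ k, potComp p (max (z + Δ k) 0) ≤ N * A ^ p + K * σ ^ 2 :=
    calc ∑ k, potComp p (max (z + Δ k) 0)
        ≤ ∑ k, (A ^ p + 2 * p * z * A ^ (p - 1) * Δ k + K * Δ k ^ 2) :=
          sum_le_sum fun k _ ↦ hpoint k
      _ = N * A ^ p + 2 * p * z * A ^ (p - 1) * ∑ k, Δ k + K * ∑ k, Δ k ^ 2 := by
        simp only [sum_add_distrib, ← mul_sum, sum_const, card_univ, nsmul_eq_mul, N]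
      _ ≤ N * A ^ p + K * σ ^ 2 := by
        have hdrift := mul_nonpos_of_nonneg_of_nonpos hcoef hsum
        have hquad := mul_le_mul_of_nonneg_left hsq hK
        linarith
  calc 1 / N * ∑ k, potComp p (max (z + Δ k) 0) ≤ 1 / N * (N * A ^ p + K * σ ^ 2) := by gcongr
    _ = A ^ p + p * A ^ (p - 1) * (2 * √(exp 1) * p * σ ^ 2 / N) := by
        simp only [K]; field_simp
    _ ≤ _ := rpow_add_mul_rpow_sub_one_le hp hA.le (by positivity)

theorem sum_add_const_rpow_le {ι : Type*} [Fintype ι] {p S C : ℝ} (hp : 1 ≤ p) (hS : 0 ≤ S)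
    (hC : 0 ≤ C) {a : ι → ℝ} (ha : ∀ i, 0 ≤ a i)
    (h : ∑ i, a i ^ p ≤ Fintype.card ι * S ^ p) :
    ∑ i, (a i + C) ^ p ≤ Fintype.card ι * (S + C) ^ p := by
  set N : ℝ := (Fintype.card ι : ℝ)
  have hp₀ : 0 < 1 / p := by positivity
  have hroot {x : ℝ} (hx : 0 ≤ x) : (N * x ^ p) ^ (1 / p) = N ^ (1 / p) * x := by
    rw [mul_rpow (by positivity) (by positivity), ← rpow_mul hx, mul_one_div_cancel (by positivity),
      rpow_one]
  rw [← rpow_le_rpow_iff (sum_nonneg fun i _ ↦ by have := ha i; positivity) (by positivity) hp₀,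
    hroot (by positivity), mul_add]
  calc (∑ i, (a i + C) ^ p) ^ (1 / p)
      ≤ (∑ i, a i ^ p) ^ (1 / p) + (∑ _i : ι, C ^ p) ^ (1 / p) :=
        Lp_add_le_of_nonneg univ hp (fun i _ ↦ ha i) (fun _ _ ↦ hC)
    _ ≤ N ^ (1 / p) * S + N ^ (1 / p) * C := by
        rw [sum_const, card_univ, nsmul_eq_mul, hroot hC, ← hroot hS]
        gcongr
        exact sum_nonneg fun i _ ↦ by have := ha i; positivity

theorem DeficitProcess.sum_potComp_le {Q : Type*} [Fintype Q] {n : ℕ} {σ p : ℝ}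
    {z : ℕ → Q → ℝ} (hz : DeficitProcess Q n σ p z) (hn : 1 ≤ n) (hp : 1 ≤ p) (t : ℕ) :
    ∑ q, potComp p (z t q) ≤
      Fintype.card Q * (4 * p ^ 2 + 2 * √(exp 1) * p * σ ^ 2 * t / n) ^ p := by
  obtain ⟨hnonneg, hzero, hstep⟩ := hz
  have : Nonempty (Fin n) := ⟨⟨0, hn⟩⟩
  induction t with
  | zero => simp [potComp, hzero]
  | succ t ih =>
    obtain ⟨Δ, hΔ, hsum, hsq, hpot⟩ := hstep t
    have hq (q : Q) := avg_potComp_max_le hp (hnonneg t q) (fun k ↦ abs_le.2 (hΔ q k))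
      (hsum q) (hsq q)
    simp only [Fintype.card_fin] at hq
    calc ∑ q, potComp p (z (t + 1) q)
        ≤ ∑ q, 1 / (n : ℝ) * ∑ k, potComp p (max (z t q + Δ q k) 0) := by
          rwa [← mul_sum, sum_comm]
      _ ≤ ∑ q, (z t q ^ 2 + 4 * p ^ 2 + 2 * √(exp 1) * p * σ ^ 2 / n) ^ p :=
          sum_le_sum fun q _ ↦ hq q
      _ ≤ Fintype.card Q * (4 * p ^ 2 + 2 * √(exp 1) * p * σ ^ 2 * t / n
            + 2 * √(exp 1) * p * σ ^ 2 / n) ^ p :=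
          sum_add_const_rpow_le hp (by positivity) (by positivity) (fun q ↦ by positivity) ih
      _ = Fintype.card Q * (4 * p ^ 2 + 2 * √(exp 1) * p * σ ^ 2 * ↑(t + 1) / n) ^ p := by
          push_cast; ring_nf

theorem ncard_lt_mul_le_sum_potComp {Q : Type*} [Fintype Q] {p c : ℝ} (hp : 0 ≤ p) (hc : 0 ≤ c)
    (z : Q → ℝ) : ({q | c < z q}.ncard : ℝ) * (c ^ 2) ^ p ≤ ∑ q, potComp p (z q) := by
  classical
  rw [Set.ncard_eq_toFinset_card', Set.toFinset_ofPred]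
  calc ((univ.filter fun q ↦ c < z q).card : ℝ) * (c ^ 2) ^ p
      ≤ ∑ q ∈ univ.filter fun q ↦ c < z q, potComp p (z q) := by
        rw [← nsmul_eq_mul]
        refine card_nsmul_le_sum _ _ _ fun q hq ↦ rpow_le_rpow (by positivity) ?_ hp
        nlinarith [(mem_filter.1 hq).2]
    _ ≤ ∑ q, potComp p (z q) :=
        sum_le_sum_of_subset_of_nonneg (filter_subset _ _) fun q _ _ ↦ by unfold potComp; positivity

theorem few_disappointed_general (Q : Type*) [Fintype Q]
    (n : ℕ) (hn : 1 ≤ n) (p σ : ℝ) (hp : 1 ≤ p)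
    (z : ℕ → Q → ℝ) (hproc : DeficitProcess Q n σ p z) :
    ∀ t : ℕ, ∀ c : ℝ, 0 < c →
      (({q : Q | c < z t q}.ncard : ℝ)) ≤
        (Fintype.card Q : ℝ) *
          ((4 * p ^ 2 + 2 * Real.sqrt (Real.exp 1) * p * σ ^ 2 * (t : ℝ) / (n : ℝ)) / c ^ 2) ^ p := by
  intro t c hc
  have hcp : 0 < (c ^ 2) ^ p := by positivity
  rw [div_rpow (by positivity) (sq_nonneg c), ← mul_div_assoc, le_div_iff₀ hcp]
  exact (ncard_lt_mul_le_sum_potComp (by linarith) hc.le _).trans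
    (hproc.sum_potComp_le hn hp t)

/-- **Few `c`-disappointed variables.** For a deficit process satisfying the
moment conditions, at any time `t` and for every `c > 0`, the number of quality
variables with deficit exceeding `c` is at most
`m * ((4p² + 2 √e p σ² t / n) / c²) ^ p`. -/
theorem few_disappointed (Q : Type*) [Fintype Q] (hm : 1 ≤ Fintype.card Q)
    (n : ℕ) (hn : 1 ≤ n) (p σ : ℝ) (hp : 1 ≤ p) (hσ : 0 ≤ σ)
    (z : ℕ → Q → ℝ) (hproc : DeficitProcess Q n σ p z) :
    ∀ t : ℕ, ∀ c : ℝ, 0 < c →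
      (({q : Q | c < z t q}.ncard : ℝ)) ≤
        (Fintype.card Q : ℝ) *
          ((4 * p ^ 2 + 2 * Real.sqrt (Real.exp 1) * p * σ ^ 2 * (t : ℝ) / (n : ℝ)) / c ^ 2) ^ p :=
  few_disappointed_general Q n hn p σ hp z hproc
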